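/- arXiv:0709.1452 — 4 statements merged into one kernel-verified Lean document; each statement's English description precedes it below -/
import Mathlib

section
/- Let p be a projection operator on a vector space W with nondegenerate symmetric bilinear form. If both the kernel and the range of p are isotropic subspaces, then p + pᵗ = 1. Conversely, if p is a projection with p + pᵗ = 1, then both ker(p) and range(p) are isotropic. -/
/-!
For any endomorphism `p` one has the polarization-type identity
`B (p w) w' + B w (p w') - B w w' = B (p w) (p w') - B (w - p w) (w' - p w')`.
If `p` is idempotent, `p w ∈ range p` and `w - p w ∈ ker p`, so isotropy of both subspaces
makes the right-hand side vanish. Conversely, `p + pᵗ = 1` evaluated on `ker p` reads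
`0 = B x y`, and on `range p`, where `p` acts as the identity, it reads `2 B x y = B x y`.
-/

namespace LinearMap.BilinForm

variable {R M : Type*} [CommRing R] [AddCommGroup M] [Module R M]
  (B : LinearMap.BilinForm R M) (p : Module.End R M)

theorem apply_add_apply_sub_apply_eq (w w' : M) :
    B (p w) w' + B w (p w') - B w w' = B (p w) (p w') - B (w - p w) (w' - p w') := by
  simp only [map_sub, LinearMap.sub_apply]
  ring

theorem apply_add_apply_eq_of_isotropic_ker_range (hp : IsIdempotentElem p)
    (hker : ∀ x ∈ ker p, ∀ y ∈ ker p, B x y = 0)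
    (hran : ∀ x ∈ range p, ∀ y ∈ range p, B x y = 0) (w w' : M) :
    B (p w) w' + B w (p w') = B w w' := by
  have hsub : ∀ v, v - p v ∈ ker p := fun v =>
    IsIdempotentElem.ker_eq_range_one_sub hp ▸ ⟨v, rfl⟩
  rw [← sub_eq_zero, apply_add_apply_sub_apply_eq,
    hran _ (mem_range_self p w) _ (mem_range_self p w'), hker _ (hsub w) _ (hsub w'), sub_zero]

variable {B p}

theorem apply_eq_zero_of_mem_ker (h : ∀ w w' : M, B (p w) w' + B w (p w') = B w w')
    {x y : M} (hx : x ∈ ker p) (hy : y ∈ ker p) : B x y = 0 := by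
  simpa [mem_ker.mp hx, mem_ker.mp hy, eq_comm] using h x y

theorem apply_eq_zero_of_mem_range (hp : IsIdempotentElem p)
    (h : ∀ w w' : M, B (p w) w' + B w (p w') = B w w')
    {x y : M} (hx : x ∈ range p) (hy : y ∈ range p) : B x y = 0 := by
  rw [IsIdempotentElem.mem_range_iff hp] at hx hy
  simpa [hx, hy] using h x y

end LinearMap.BilinForm

theorem pure_spinors_stmt1_general {K W : Type*} [Field K] [AddCommGroup W] [Module K W]
    (B : LinearMap.BilinForm K W)
    (p : W →ₗ[K] W) (hp : p ∘ₗ p = p) :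
    ((∀ x ∈ LinearMap.ker p, ∀ y ∈ LinearMap.ker p, B x y = 0) ∧
     (∀ x ∈ LinearMap.range p, ∀ y ∈ LinearMap.range p, B x y = 0)) ↔
    (∀ w w', B (p w) w' + B w (p w') = B w w') := by
  constructor
  · rintro ⟨hker, hran⟩
    exact LinearMap.BilinForm.apply_add_apply_eq_of_isotropic_ker_range B p hp hker hran
  · intro h
    exact ⟨fun _ hx _ hy => LinearMap.BilinForm.apply_eq_zero_of_mem_ker h hx hy,
      fun _ hx _ hy => LinearMap.BilinForm.apply_eq_zero_of_mem_range hp h hx hy⟩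

/-- Let `p` be a projection operator on a vector space `W` with a nondegenerate
symmetric bilinear form `B`. Then the kernel and the range of `p` are both isotropic if and
only if `p + pᵗ = 1`, the latter condition being expressed as
`B (p w) w' + B w (p w') = B w w'` for all `w, w'`. -/
theorem pure_spinors_stmt1 {K W : Type*} [Field K] [AddCommGroup W] [Module K W]
    [FiniteDimensional K W] (B : LinearMap.BilinForm K W)
    (hsymm : ∀ x y, B x y = B y x) (hnd : B.Nondegenerate)
    (p : W →ₗ[K] W) (hp : p ∘ₗ p = p) :
    ((∀ x ∈ LinearMap.ker p, ∀ y ∈ LinearMap.ker p, B x y = 0) ∧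
     (∀ x ∈ LinearMap.range p, ∀ y ∈ LinearMap.range p, B x y = 0)) ↔
    (∀ w w', B (p w) w' + B w (p w') = B w w') :=
  pure_spinors_stmt1_general B p hp
end

section
/- Let V be a vector space and 𝕍 = V ⊕ V* with the split bilinear form ⟨v₁⊕α₁, v₂⊕α₂⟩ = α₁(v₂) + α₂(v₁). For any nonzero element φ of the exterior algebra ∧V*, the null space N_φ = {v⊕α ∈ 𝕍 : ι(v)φ + α∧φ = 0} is an isotropic subspace of 𝕍. -/
/-
ρ satisfies the Clifford relation ρ(w)ρ(w') + ρ(w')ρ(w) = ⟨w, w'⟩ · id, since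
contractions anticommute, wedging with 1-forms anticommutes, and ι(v)(α ∧ φ) = α(v) φ - α ∧ ι(v)φ.
If ρ(w)φ = ρ(w')φ = 0, the left side kills φ, so ⟨w, w'⟩ φ = 0 and φ ≠ 0 forces ⟨w, w'⟩ = 0.
-/

open ExteriorAlgebra CliffordAlgebra Module

/-- The Clifford action of `w = v ⊕ α ∈ V ⊕ V*` on the contravariant spinor module `∧ V*`:
`ρ(w)φ = ι(v)φ + α ∧ φ`. -/
noncomputable def cliffordRho {K V : Type*} [Field K] [AddCommGroup V] [Module K V]
    (w : V × Module.Dual K V) (φ : ExteriorAlgebra K (Module.Dual K V)) :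
    ExteriorAlgebra K (Module.Dual K V) :=
  CliffordAlgebra.contractLeft (Module.Dual.eval K V w.1) φ + ExteriorAlgebra.ι K w.2 * φ

theorem ExteriorAlgebra.ι_mul_ι_mul_comm {R M : Type*} [CommRing R] [AddCommGroup M] [Module R M]
    (x y : M) (φ : ExteriorAlgebra R M) :
    ι R x * (ι R y * φ) = -(ι R y * (ι R x * φ)) := by
  rw [← mul_assoc, ← mul_assoc, ← neg_mul, eq_neg_of_add_eq_zero_left (ι_add_mul_swap x y)]

theorem cliffordRho_anticomm {K V : Type*} [Field K] [AddCommGroup V] [Module K V]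
    (w w' : V × Module.Dual K V) (φ : ExteriorAlgebra K (Module.Dual K V)) :
    cliffordRho w (cliffordRho w' φ) + cliffordRho w' (cliffordRho w φ) =
      (w.2 w'.1 + w'.2 w.1) • φ := by
  simp only [cliffordRho, map_add, mul_add, contractLeft_ι_mul, Dual.eval_apply]
  rw [contractLeft_comm (Dual.eval K V w.1), ι_mul_ι_mul_comm w.2 w'.2]
  module

theorem pure_spinors_stmt2_general {K V : Type*} [Field K] [AddCommGroup V] [Module K V]
    (φ : ExteriorAlgebra K (Module.Dual K V)) (hφ : φ ≠ 0)
    (w w' : V × Module.Dual K V)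
    (hw : cliffordRho w φ = 0) (hw' : cliffordRho w' φ = 0) :
    w.2 w'.1 + w'.2 w.1 = 0 := by
  have h := cliffordRho_anticomm w w' φ
  rw [hw, hw'] at h
  simp only [cliffordRho, map_zero, mul_zero, add_zero] at h
  exact (smul_eq_zero.mp h.symm).resolve_right hφ

/-- For any nonzero `φ ∈ ∧V*`, the null space
`N_φ = {v ⊕ α : ι(v)φ + α ∧ φ = 0}` is isotropic for the pairing bilinear form
`⟨v₁⊕α₁, v₂⊕α₂⟩ = α₁(v₂) + α₂(v₁)` on `𝕍 = V ⊕ V*`. -/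
theorem pure_spinors_stmt2 {K V : Type*} [Field K] [CharZero K] [AddCommGroup V] [Module K V]
    [FiniteDimensional K V]
    (φ : ExteriorAlgebra K (Module.Dual K V)) (hφ : φ ≠ 0)
    (w w' : V × Module.Dual K V)
    (hw : cliffordRho w φ = 0) (hw' : cliffordRho w' φ = 0) :
    w.2 w'.1 + w'.2 w.1 = 0 :=
  pure_spinors_stmt2_general φ hφ w w' hw hw'
end

section
/- Let V be a finite-dimensional vector space and ω ∈ ∧²V* a 2-form. Then φ = exp(-ω) ∈ ∧V* is a pure spinor whose null space is the graph Gr_ω = {v ⊕ ι(v)ω : v ∈ V} ⊆ V ⊕ V*. In particular, Gr_ω is a Lagrangian subspace of V ⊕ V*. -/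
/-!
Contraction with `v` is a derivation on even forms, so `ι_v exp(-ω) = -(ι_v ω) ∧ exp(-ω)`; the
truncation of the exponential is harmless because `(ι_v ω) ∧ ω^n` has degree `2n + 1 > dim V`.
Hence `ρ(v ⊕ α) φ = (α - ι_v ω) ∧ φ`. As `ω` is nilpotent, `φ` is `1` plus a nilpotent, hence a
unit of `∧V*`, so `ρ(v ⊕ α) φ = 0` exactly when `α = ι_v ω`.

For the Lagrangian property, `ι_x ι_y ω = -ι_y ι_x ω` makes the graph isotropic. Conversely, if
`v ⊕ α` is orthogonal to the graph, comparing its pairing with `x ⊕ ι_x ω` to that of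
`v ⊕ ι_v ω` gives `α x = (ι_v ω) x` for every `x`.
-/

open ExteriorAlgebra CliffordAlgebra Module

/-- Truncated exponential in an algebra, valid for nilpotent arguments of index `≤ n`. -/
noncomputable def expA {K A : Type*} [Field K] [Ring A] [Algebra K A] (n : ℕ) (a : A) : A :=
  ∑ k ∈ Finset.range (n + 1), (k.factorial : K)⁻¹ • a ^ k

section TruncatedExponential

variable {K A : Type*} [Field K] [Ring A] [Algebra K A]

theorem expA_eq_one_add_mul (n : ℕ) (a : A) :
    expA (K := K) n a = 1 + a * ∑ k ∈ Finset.range n, ((k + 1).factorial : K)⁻¹ • a ^ k := by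
  simp only [expA, Finset.sum_range_succ', Finset.mul_sum, mul_smul_comm, ← pow_succ',
    Nat.factorial_zero, Nat.cast_one, inv_one, pow_zero, one_smul, add_comm]

theorem isUnit_expA_of_isNilpotent (n : ℕ) {a : A} (ha : IsNilpotent a) :
    IsUnit (expA (K := K) n a) := by
  rw [expA_eq_one_add_mul]
  refine (Commute.isNilpotent_mul_right ?_ ha).isUnit_one_add
  exact Commute.sum_right _ _ _ fun k _ => ((Commute.refl a).pow_right k).smul_right _

end TruncatedExponential

namespace ExteriorAlgebra

section TwoForms

variable {R M : Type*} [CommRing R] [AddCommGroup M] [Module R M]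

@[elab_as_elim]
theorem exteriorPower_two_induction {C : ExteriorAlgebra R M → Prop}
    (ι_mul_ι : ∀ a b, C (ι R a * ι R b)) (add : ∀ x y, C x → C y → C (x + y))
    {ω : ExteriorAlgebra R M} (hω : ω ∈ ⋀[R]^2 M) : C ω := by
  rw [exteriorPower, pow_two] at hω
  exact Submodule.mul_induction_on hω (by rintro _ ⟨a, rfl⟩ _ ⟨b, rfl⟩; exact ι_mul_ι a b) add

theorem ι_mul_ι_eq_neg (a b : M) : ι R a * ι R b = -(ι R b * ι R a) :=
  eq_neg_of_add_eq_zero_left (ι_add_mul_swap a b)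

variable {ω : ExteriorAlgebra R M}

theorem commute_ι_of_mem_two (a : M) (hω : ω ∈ ⋀[R]^2 M) : Commute (ι R a) ω := by
  refine exteriorPower_two_induction (fun x y => ?_) (fun _ _ hx hy => hx.add_right hy) hω
  rw [Commute, SemiconjBy, ← mul_assoc, ι_mul_ι_eq_neg a x, neg_mul, mul_assoc,
    ι_mul_ι_eq_neg a y, mul_neg, neg_neg, mul_assoc]

theorem contractLeft_mem_range_ι_of_mem_two (d : Dual R M) (hω : ω ∈ ⋀[R]^2 M) :
    contractLeft d ω ∈ LinearMap.range (ι R : M →ₗ[R] ExteriorAlgebra R M) := by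
  refine exteriorPower_two_induction (fun a b => ?_)
    (fun _ _ hx hy => by rw [map_add]; exact add_mem hx hy) hω
  rw [contractLeft_ι_mul, contractLeft_ι, ← Algebra.commutes, ← Algebra.smul_def]
  exact sub_mem (Submodule.smul_mem _ _ (LinearMap.mem_range_self _ b))
    (Submodule.smul_mem _ _ (LinearMap.mem_range_self _ a))

theorem contractLeft_mul_of_mem_two (d : Dual R M) (hω : ω ∈ ⋀[R]^2 M)
    (x : ExteriorAlgebra R M) :
    contractLeft d (ω * x) = contractLeft d ω * x + ω * contractLeft d x := by
  refine exteriorPower_two_induction (C := fun ω =>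
      contractLeft d (ω * x) = contractLeft d ω * x + ω * contractLeft d x)
    (fun a b => ?_) (fun _ _ hω hω' => ?_) hω
  · rw [mul_assoc, contractLeft_ι_mul, contractLeft_ι_mul, contractLeft_ι_mul, contractLeft_ι,
      ← Algebra.commutes, ← Algebra.smul_def]
    simp only [mul_sub, sub_mul, smul_mul_assoc, mul_smul_comm, mul_assoc]
    abel
  · rw [add_mul, map_add, map_add, hω, hω', add_mul, add_mul]
    abel

theorem contractLeft_pow_succ_of_mem_two (d : Dual R M) (hω : ω ∈ ⋀[R]^2 M) (k : ℕ) :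
    contractLeft d (ω ^ (k + 1)) = (k + 1) • (contractLeft d ω * ω ^ k) := by
  induction k with
  | zero => simp
  | succ k ih =>
    obtain ⟨γ, hγ⟩ := contractLeft_mem_range_ι_of_mem_two d hω
    rw [pow_succ' ω (k + 1), contractLeft_mul_of_mem_two d hω, ih, mul_smul_comm, ← mul_assoc,
      ← hγ, ← (commute_ι_of_mem_two γ hω).eq, mul_assoc, ← pow_succ', succ_nsmul _ (k + 1)]
    abel

theorem contractLeft_eq_ι_antisymm {x : ExteriorAlgebra R M} {d d' : Dual R M} {α β : M}
    (hα : contractLeft d x = ι R α) (hβ : contractLeft d' x = ι R β) : d β + d' α = 0 := by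
  have h := contractLeft_comm (d := d) (d' := d') x
  rw [hα, hβ, contractLeft_ι, contractLeft_ι, ← map_neg] at h
  rw [(algebraMap_leftInverse M).injective h, neg_add_cancel]

theorem orthogonal_graph_contractLeft_iff {V : Type*} [AddCommGroup V] [Module R V]
    {ω : ExteriorAlgebra R (Dual R V)} (hω : ω ∈ ⋀[R]^2 (Dual R V)) (w : V × Dual R V) :
    (∀ u : V × Dual R V, contractLeft (Dual.eval R V u.1) ω = ι R u.2 → w.2 u.1 + u.2 w.1 = 0) ↔
      contractLeft (Dual.eval R V w.1) ω = ι R w.2 := by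
  refine ⟨fun H => ?_, fun hw u hu => by simpa using contractLeft_eq_ι_antisymm hu hw⟩
  obtain ⟨γ, hγ⟩ := contractLeft_mem_range_ι_of_mem_two (Dual.eval R V w.1) hω
  suffices w.2 = γ by rw [this, hγ]
  ext x
  obtain ⟨α, hα⟩ := contractLeft_mem_range_ι_of_mem_two (Dual.eval R V x) hω
  have hw := H (x, α) hα.symm
  have hγ := contractLeft_eq_ι_antisymm hα.symm hγ.symm
  simp only [Dual.eval_apply] at hw hγ
  linear_combination hw - hγ

end TwoForms

section Exponential

variable {K M : Type*} [Field K] [CharZero K] [AddCommGroup M] [Module K M]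

theorem contractLeft_expA_of_mem_two {ω : ExteriorAlgebra K M} (d : Dual K M)
    (hω : ω ∈ ⋀[K]^2 M) {n : ℕ} (hn : contractLeft d ω * ω ^ n = 0) :
    contractLeft d (expA (K := K) n ω) = contractLeft d ω * expA (K := K) n ω := by
  have hterm (k : ℕ) : ((k + 1).factorial : K)⁻¹ • contractLeft d (ω ^ (k + 1)) =
      (k.factorial : K)⁻¹ • (contractLeft d ω * ω ^ k) := by
    rw [contractLeft_pow_succ_of_mem_two d hω, ← Nat.cast_smul_eq_nsmul K, smul_smul]
    congr 1
    rw [Nat.factorial_succ]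
    push_cast
    field_simp
  calc contractLeft d (expA (K := K) n ω)
      = ∑ k ∈ Finset.range n, (k.factorial : K)⁻¹ • (contractLeft d ω * ω ^ k) := by
        rw [expA, map_sum, Finset.sum_range_succ']
        simp only [map_smul, hterm, pow_zero, contractLeft_one, smul_zero, add_zero]
    _ = contractLeft d ω * expA (K := K) n ω := by
        rw [expA, Finset.mul_sum, Finset.sum_range_succ _ n, mul_smul_comm, hn, smul_zero,
          add_zero]
        simp only [mul_smul_comm]

end Exponential

section FiniteDimensional

variable {K M : Type*} [Field K] [AddCommGroup M] [Module K M] [FiniteDimensional K M]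
  {ω : ExteriorAlgebra K M}

theorem exteriorPower_eq_bot_of_finrank_lt {n : ℕ} (h : finrank K M < n) : ⋀[K]^n M = ⊥ :=
  Submodule.finrank_eq_zero.mp (by rw [exteriorPower.finrank_eq, Nat.choose_eq_zero_of_lt h])

theorem isNilpotent_of_mem_two (hω : ω ∈ ⋀[K]^2 M) : IsNilpotent ω := by
  refine ⟨finrank K M + 1, ?_⟩
  have h : ω ^ (finrank K M + 1) ∈ ⋀[K]^((finrank K M + 1) • 2) M :=
    SetLike.pow_mem_graded _ hω
  rwa [exteriorPower_eq_bot_of_finrank_lt (by rw [smul_eq_mul]; omega), Submodule.mem_bot] at h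

theorem contractLeft_mul_pow_finrank_of_mem_two (d : Dual K M) (hω : ω ∈ ⋀[K]^2 M) :
    contractLeft d ω * ω ^ finrank K M = 0 := by
  obtain ⟨γ, hγ⟩ := contractLeft_mem_range_ι_of_mem_two d hω
  have hγ' : contractLeft d ω ∈ ⋀[K]^1 M := by
    rw [exteriorPower, pow_one]; exact ⟨γ, hγ⟩
  have h : contractLeft d ω * ω ^ finrank K M ∈ ⋀[K]^(1 + finrank K M • 2) M :=
    SetLike.mul_mem_graded hγ' (SetLike.pow_mem_graded _ hω)
  rwa [exteriorPower_eq_bot_of_finrank_lt (by rw [smul_eq_mul]; omega), Submodule.mem_bot] at h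

end FiniteDimensional

end ExteriorAlgebra

/-- For a 2-form `ω ∈ ∧²V*`, the element `φ = exp(-ω) ∈ ∧V*` is a pure spinor
whose null space is the graph `Gr_ω = {v ⊕ ι(v)ω : v ∈ V}`; in particular `Gr_ω` is
Lagrangian (equal to its own orthogonal) in `V ⊕ V*` with the pairing bilinear form. -/
theorem pure_spinors_stmt3 {K V : Type*} [Field K] [CharZero K] [AddCommGroup V] [Module K V]
    [FiniteDimensional K V]
    (ω : ExteriorAlgebra K (Module.Dual K V))
    (hω : ω ∈ (⋀[K]^2 (Module.Dual K V)))
    (φ : ExteriorAlgebra K (Module.Dual K V))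
    (hφ : φ = expA (K := K) (Module.finrank K V) (-ω)) :
    φ ≠ 0 ∧
    (∀ w : V × Module.Dual K V,
      cliffordRho w φ = 0 ↔
        CliffordAlgebra.contractLeft (Module.Dual.eval K V w.1) ω = ExteriorAlgebra.ι K w.2) ∧
    (∀ w : V × Module.Dual K V,
      (∀ u : V × Module.Dual K V,
          CliffordAlgebra.contractLeft (Module.Dual.eval K V u.1) ω = ExteriorAlgebra.ι K u.2 →
          w.2 u.1 + u.2 w.1 = 0) ↔
        CliffordAlgebra.contractLeft (Module.Dual.eval K V w.1) ω = ExteriorAlgebra.ι K w.2) := by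
  have hω' : -ω ∈ ⋀[K]^2 (Dual K V) := neg_mem hω
  have hφ_unit : IsUnit φ := hφ ▸ isUnit_expA_of_isNilpotent _ (isNilpotent_of_mem_two hω')
  have hρ (w : V × Dual K V) :
      cliffordRho w φ = (ι K w.2 - contractLeft (Dual.eval K V w.1) ω) * φ := by
    have hvanish := contractLeft_mul_pow_finrank_of_mem_two (Dual.eval K V w.1) hω'
    rw [Subspace.dual_finrank_eq] at hvanish
    rw [cliffordRho, hφ, contractLeft_expA_of_mem_two _ hω' hvanish, map_neg]
    noncomm_ring
  refine ⟨hφ_unit.ne_zero, fun w => ?_, orthogonal_graph_contractLeft_iff hω⟩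
  rw [hρ, hφ_unit.mul_left_eq_zero, sub_eq_zero, eq_comm]
end

section
/- Let V be a finite-dimensional vector space and 𝕍 = V ⊕ V*. For any w = v⊕α ∈ 𝕍 and any φ, ψ ∈ ∧V*, one has (-1)^{|φ|}( -(ρ(w)φ)ᵀ ∧ ψ + φᵀ ∧ ρ(w)ψ ) = ι(v)(φᵀ ∧ ψ), where φ has pure parity |φ|. -/
/-!
Contraction `d⌋·` with `d ∈ M*` is an odd derivation of the Clifford algebra:
`d⌋(x y) = (d⌋x) y + (-1)^|x| x (d⌋y)`, and it commutes with reversal up to the sign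
`-(-1)^|x|`. Writing `s = (-1)^|φ|`, reversal fixes `α ∈ V*`, so `(ρ(w)φ)ᵀ = -s (ι(v)φᵀ) + φᵀ α`
and the two terms `φᵀ α ψ` cancel; what remains is `s (ι(v)φᵀ) ψ + φᵀ ι(v)ψ`, which after
multiplying by `s` is the Leibniz expansion of `ι(v)(φᵀ ψ)`.
-/

open ExteriorAlgebra CliffordAlgebra Module

/-- The reversal anti-automorphism `ᵀ` of the exterior algebra `∧ V*` (identity on `V*`). -/
noncomputable def revE {K V : Type*} [Field K] [AddCommGroup V] [Module K V]
    (x : ExteriorAlgebra K (Module.Dual K V)) : ExteriorAlgebra K (Module.Dual K V) :=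
  CliffordAlgebra.reverse (Q := (0 : QuadraticForm K (Module.Dual K V))) x

namespace CliffordAlgebra

variable {R M : Type*} [CommRing R] [AddCommGroup M] [Module R M]
  {Q : QuadraticForm R M} (d : Module.Dual R M)

local infixl:70 "⌋" => contractLeft (Q := Q)

theorem contractLeft_mul_of_mem_evenOdd_zero {x : CliffordAlgebra Q} (hx : x ∈ evenOdd Q 0)
    (y : CliffordAlgebra Q) : d⌋(x * y) = d⌋x * y + x * (d⌋y) := by
  induction x, hx using even_induction generalizing y with
  | algebraMap r => simp [contractLeft_algebraMap_mul, contractLeft_algebraMap]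
  | add a b _ _ iha ihb => simp only [add_mul, map_add, iha, ihb]; abel
  | ι_mul_ι_mul m₁ m₂ a _ ih =>
    simp only [mul_assoc, contractLeft_ι_mul, ih, mul_sub, sub_mul, smul_mul_assoc,
      mul_smul_comm, mul_add]
    abel

theorem contractLeft_mul_of_mem_evenOdd_one {x : CliffordAlgebra Q} (hx : x ∈ evenOdd Q 1)
    (y : CliffordAlgebra Q) : d⌋(x * y) = d⌋x * y - x * (d⌋y) := by
  induction x, hx using odd_induction generalizing y with
  | ι v => simp [contractLeft_ι_mul, contractLeft_ι, Algebra.smul_def]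
  | add a b _ _ iha ihb => simp only [add_mul, map_add, iha, ihb]; abel
  | ι_mul_ι_mul m₁ m₂ a _ ih =>
    simp only [mul_assoc, contractLeft_ι_mul, ih, mul_sub, sub_mul, smul_mul_assoc,
      mul_smul_comm]
    abel

theorem contractLeft_mul_of_mem_evenOdd {i : ZMod 2} {x : CliffordAlgebra Q}
    (hx : x ∈ evenOdd Q i) (y : CliffordAlgebra Q) :
    d⌋(x * y) = d⌋x * y + (-1 : R) ^ i.val • (x * (d⌋y)) := by
  fin_cases i
  · simpa [ZMod.val] using contractLeft_mul_of_mem_evenOdd_zero d hx y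
  · simpa [ZMod.val, sub_eq_add_neg] using contractLeft_mul_of_mem_evenOdd_one d hx y

theorem reverse_contractLeft_of_mem_evenOdd_zero {x : CliffordAlgebra Q}
    (hx : x ∈ evenOdd Q 0) : reverse (d⌋x) = -(d⌋reverse x) := by
  induction x, hx using even_induction with
  | algebraMap r => simp [contractLeft_algebraMap]
  | add a b _ _ iha ihb => simp only [map_add, iha, ihb]; abel
  | ι_mul_ι_mul m₁ m₂ a ha ih =>
    simp only [mul_assoc, contractLeft_ι_mul, map_sub, map_smul, reverse.map_mul, reverse_ι]
    rw [contractLeft_mul_of_mem_evenOdd_zero d ((reverse_mem_evenOdd_iff _).mpr ha), ih]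
    simp only [contractLeft_ι_mul, contractLeft_ι, mul_sub, sub_mul, smul_mul_assoc,
      mul_smul_comm, ← Algebra.commutes, ← Algebra.smul_def, neg_add, neg_sub,
      neg_mul, mul_assoc]
    abel

theorem reverse_contractLeft_of_mem_evenOdd_one {x : CliffordAlgebra Q}
    (hx : x ∈ evenOdd Q 1) : reverse (d⌋x) = d⌋reverse x := by
  induction x, hx using odd_induction with
  | ι v => simp [contractLeft_ι, reverse_ι]
  | add a b _ _ iha ihb => simp only [map_add, iha, ihb]
  | ι_mul_ι_mul m₁ m₂ a ha ih =>
    simp only [mul_assoc, contractLeft_ι_mul, map_sub, map_smul, reverse.map_mul, reverse_ι]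
    rw [contractLeft_mul_of_mem_evenOdd_one d ((reverse_mem_evenOdd_iff _).mpr ha), ih]
    simp only [contractLeft_ι_mul, contractLeft_ι, mul_sub, sub_mul, smul_mul_assoc,
      mul_smul_comm, ← Algebra.commutes, ← Algebra.smul_def, mul_assoc]
    abel

theorem reverse_contractLeft_of_mem_evenOdd {i : ZMod 2} {x : CliffordAlgebra Q}
    (hx : x ∈ evenOdd Q i) : reverse (d⌋x) = -((-1 : R) ^ i.val • (d⌋reverse x)) := by
  fin_cases i
  · simpa [ZMod.val] using reverse_contractLeft_of_mem_evenOdd_zero d hx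
  · simpa [ZMod.val] using reverse_contractLeft_of_mem_evenOdd_one d hx

end CliffordAlgebra

theorem pure_spinors_stmt6_general {K V : Type*} [Field K] [AddCommGroup V] [Module K V]
    (w : V × Module.Dual K V) (φ ψ : ExteriorAlgebra K (Module.Dual K V))
    (i : ZMod 2)
    (hφ : φ ∈ CliffordAlgebra.evenOdd (0 : QuadraticForm K (Module.Dual K V)) i) :
    ((-1 : K) ^ i.val) •
      (-(revE (cliffordRho w φ) * ψ) + revE φ * cliffordRho w ψ) =
    CliffordAlgebra.contractLeft (Module.Dual.eval K V w.1) (revE φ * ψ) := by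
  have hrev_ι : revE (ExteriorAlgebra.ι K w.2) = ExteriorAlgebra.ι K w.2 := reverse_ι _
  simp only [cliffordRho, revE] at hrev_ι ⊢
  rw [map_add, reverse.map_mul, hrev_ι, reverse_contractLeft_of_mem_evenOdd _ hφ,
    contractLeft_mul_of_mem_evenOdd _ ((reverse_mem_evenOdd_iff _).mpr hφ)]
  set s : K := (-1) ^ i.val
  have hs : s * s = 1 := by rw [← mul_pow, neg_one_mul, neg_neg, one_pow]
  rw [add_mul, neg_mul, smul_mul_assoc, mul_add]
  simp only [neg_add, neg_neg, smul_add, smul_neg, smul_smul, hs, one_smul, mul_assoc]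
  abel

/-- for `w = v ⊕ α ∈ V ⊕ V*` and `φ, ψ ∈ ∧V*` with `φ` of pure parity `i`,
`(-1)^{|φ|} ( -(ρ(w)φ)ᵀ ∧ ψ + φᵀ ∧ ρ(w)ψ ) = ι(v)(φᵀ ∧ ψ)`,
where `ᵀ` is the reversal anti-automorphism of the exterior algebra. -/
theorem pure_spinors_stmt6 {K V : Type*} [Field K] [CharZero K] [AddCommGroup V] [Module K V]
    [FiniteDimensional K V]
    (w : V × Module.Dual K V) (φ ψ : ExteriorAlgebra K (Module.Dual K V))
    (i : ZMod 2)
    (hφ : φ ∈ CliffordAlgebra.evenOdd (0 : QuadraticForm K (Module.Dual K V)) i) :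
    ((-1 : K) ^ i.val) •
      (-(revE (cliffordRho w φ) * ψ) + revE φ * cliffordRho w ψ) =
    CliffordAlgebra.contractLeft (Module.Dual.eval K V w.1) (revE φ * ψ) :=
  pure_spinors_stmt6_general w φ ψ i hφ
end
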